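/- arXiv:2407.17000 — 6 statements merged into one kernel-verified Lean document; each statement's English description precedes it below -/
import Mathlib

section
/- Let n be a positive natural number, let U be an n×n complex unitary matrix, and let σ be a subset of the index set {1,…,n}. Then the principal minor of U indexed by σ and the complementary principal minor of U indexed by the complement of σ have equal magnitude: |det U_{σσ}| = |det U_{σᶜσᶜ}|. -/
/-!
Write a unitary `V = [[A, B], [C, D]]` in block form. The first block row of `V Vᴴ = 1` gives
`V * [[Aᴴ, 0], [Bᴴ, 1]] = [[1, B], [0, D]]`, so `det V * conj (det A) = det D`, and `|det V| = 1`.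
Any principal minor and its complement are the two diagonal blocks of a reindexing of `U`.
-/

open Matrix

/-- The principal minor of a matrix `M` indexed by a subset `σ` of the indices:
the determinant of the submatrix keeping rows and columns in `σ`.
By convention, the minor indexed by the empty set is `1` (determinant of the empty matrix). -/
noncomputable def principalMinor {n : ℕ} (M : Matrix (Fin n) (Fin n) ℂ)
    (σ : Finset (Fin n)) : ℂ :=
  (M.submatrix (fun i : σ => (i : Fin n)) (fun i : σ => (i : Fin n))).det

namespace Matrix

variable {m n : Type*} [Fintype m] [Fintype n] [DecidableEq m] [DecidableEq n]

theorem det_toBlocks₂₂_eq_det_mul_star_det_toBlocks₁₁ {R : Type*} [CommRing R] [StarRing R]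
    {V : Matrix (m ⊕ n) (m ⊕ n) R} (hV : V * Vᴴ = 1) :
    V.toBlocks₂₂.det = V.det * star V.toBlocks₁₁.det := by
  obtain ⟨A, B, C, D, rfl⟩ : ∃ A B C D, V = fromBlocks A B C D :=
    ⟨_, _, _, _, (fromBlocks_toBlocks V).symm⟩
  rw [fromBlocks_conjTranspose, fromBlocks_multiply, ← fromBlocks_one, fromBlocks_inj] at hV
  obtain ⟨hAB, -, hCD, -⟩ := hV
  have hcol : fromBlocks A B C D * fromBlocks Aᴴ 0 Bᴴ 1 = fromBlocks 1 B 0 D := by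
    rw [fromBlocks_multiply, hAB, hCD]
    simp
  have hdet := congrArg det hcol
  rw [det_mul, det_fromBlocks_zero₁₂, det_fromBlocks_zero₂₁, det_conjTranspose] at hdet
  simpa using hdet.symm

theorem norm_det_toBlocks₁₁_eq_norm_det_toBlocks₂₂ {𝕜 : Type*} [RCLike 𝕜]
    {V : Matrix (m ⊕ n) (m ⊕ n) 𝕜} (hV : V ∈ unitaryGroup (m ⊕ n) 𝕜) :
    ‖V.toBlocks₁₁.det‖ = ‖V.toBlocks₂₂.det‖ := by
  have hdet : ‖V.det‖ = 1 := CStarRing.norm_of_mem_unitary (det_of_mem_unitary hV)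
  rw [det_toBlocks₂₂_eq_det_mul_star_det_toBlocks₁₁ (mem_unitaryGroup_iff.mp hV), norm_mul, hdet,
    norm_star, one_mul]

theorem submatrix_equiv_mem_unitaryGroup {R : Type*} [CommRing R] [StarRing R]
    {U : Matrix m m R} (hU : U ∈ unitaryGroup m R) (e : n ≃ m) :
    U.submatrix e e ∈ unitaryGroup n R := by
  rw [mem_unitaryGroup_iff', star_eq_conjTranspose, conjTranspose_submatrix, submatrix_mul_equiv,
    ← star_eq_conjTranspose, hU.1, submatrix_one_equiv]

theorem norm_det_submatrix_eq_norm_det_submatrix_compl {ι 𝕜 : Type*} [Fintype ι] [DecidableEq ι]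
    [RCLike 𝕜] {U : Matrix ι ι 𝕜} (hU : U ∈ unitaryGroup ι 𝕜) (s : Finset ι) :
    ‖(U.submatrix ((↑) : s → ι) (↑)).det‖ = ‖(U.submatrix ((↑) : ↥sᶜ → ι) (↑)).det‖ :=
  let e : s ⊕ ↥sᶜ ≃ ι :=
    (Equiv.sumCongr (.refl _) (.subtypeEquivRight fun _ => Finset.mem_compl)).trans
      (Equiv.sumCompl (· ∈ s))
  norm_det_toBlocks₁₁_eq_norm_det_toBlocks₂₂ (submatrix_equiv_mem_unitaryGroup hU e)

end Matrix

theorem abs_principalMinor_eq_abs_compl_general {n : ℕ}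
    (U : Matrix (Fin n) (Fin n) ℂ) (hU : Uᴴ * U = 1) (σ : Finset (Fin n)) :
    ‖principalMinor U σ‖ = ‖principalMinor U σᶜ‖ :=
  norm_det_submatrix_eq_norm_det_submatrix_compl (mem_unitaryGroup_iff'.mpr hU) σ

/-- Complementary principal minors of a unitary matrix have equal magnitude. -/
theorem abs_principalMinor_eq_abs_compl {n : ℕ} (hn : 0 < n)
    (U : Matrix (Fin n) (Fin n) ℂ) (hU : Uᴴ * U = 1) (σ : Finset (Fin n)) :
    ‖principalMinor U σ‖ = ‖principalMinor U σᶜ‖ :=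
  abs_principalMinor_eq_abs_compl_general U hU σ
end

section
/- Let n be a positive natural number, let U be an n×n complex unitary matrix, and let σ be a subset of the index set {1,…,n}. Then the product of the principal minor indexed by σ and the complementary principal minor indexed by σᶜ satisfies det U_{σσ} · det U_{σᶜσᶜ} = |det U_{σσ}|² · det U. In particular, when both minors are nonzero, the phase angles of the two complementary principal minors add up to the phase angle of det U. -/
/-!
Split the indices into `σ` and its complement, so that `U` becomes a block matrix
`[[A, B], [C, D]]` with `A = U_σσ` and `D = U_σᶜσᶜ`. Unitarity gives `A Aᴴ + B Bᴴ = 1` and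
`C Aᴴ + D Bᴴ = 0`, hence `U · [[Aᴴ, 0], [Bᴴ, 1]] = [[1, B], [0, D]]`. Taking determinants,
`det U · conj (det A) = det D`, and multiplying by `det A` gives the identity.
-/

open Matrix

namespace Matrix

variable {R : Type*} [CommRing R] [StarRing R]

theorem det_fromBlocks₂₂_eq_det_mul_star_det_fromBlocks₁₁ {m o : Type*}
    [Fintype m] [DecidableEq m] [Fintype o] [DecidableEq o]
    (A : Matrix m m R) (B : Matrix m o R) (C : Matrix o m R) (D : Matrix o o R)
    (h : fromBlocks A B C D * (fromBlocks A B C D)ᴴ = 1) :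
    D.det = (fromBlocks A B C D).det * star A.det := by
  rw [fromBlocks_conjTranspose, fromBlocks_multiply, ← fromBlocks_one, fromBlocks_inj] at h
  obtain ⟨hAA, -, hCA, -⟩ := h
  have hmul : fromBlocks A B C D * fromBlocks Aᴴ 0 Bᴴ 1 = fromBlocks 1 B 0 D := by
    rw [fromBlocks_multiply, hAA, hCA]
    simp
  have hdet := congrArg det hmul
  rw [det_mul, det_fromBlocks_zero₁₂, det_fromBlocks_zero₂₁] at hdet
  simpa [det_conjTranspose] using hdet.symm

theorem det_toBlock_compl_eq_det_mul_star_det_toBlock {ι : Type*} [Fintype ι] [DecidableEq ι]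
    (M : Matrix ι ι R) (hM : M * Mᴴ = 1) (p : ι → Prop) [DecidablePred p] :
    (M.toBlock (fun i => ¬p i) (fun i => ¬p i)).det = M.det * star (M.toBlock p p).det := by
  let e := Equiv.sumCompl p
  have hblocks : M.submatrix e e = fromBlocks (M.toBlock p p) (M.toBlock p (fun i => ¬p i))
      (M.toBlock (fun i => ¬p i) p) (M.toBlock (fun i => ¬p i) (fun i => ¬p i)) := by
    ext (i | i) (j | j) <;> rfl
  have hunitary : M.submatrix e e * (M.submatrix e e)ᴴ = 1 := by
    rw [conjTranspose_submatrix, submatrix_mul_equiv, hM, submatrix_one_equiv]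
  rw [← det_submatrix_equiv_self e M, hblocks]
  exact det_fromBlocks₂₂_eq_det_mul_star_det_fromBlocks₁₁ _ _ _ _ (hblocks ▸ hunitary)

end Matrix

theorem principalMinor_eq_det_toBlock {n : ℕ} (M : Matrix (Fin n) (Fin n) ℂ)
    (σ : Finset (Fin n)) : principalMinor M σ = (M.toBlock (· ∈ σ) (· ∈ σ)).det :=
  rfl

theorem principalMinor_compl_eq_det_toBlock {n : ℕ} (M : Matrix (Fin n) (Fin n) ℂ)
    (σ : Finset (Fin n)) : principalMinor M σᶜ = (M.toBlock (· ∉ σ) (· ∉ σ)).det := by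
  rw [principalMinor,
    ← det_submatrix_equiv_self (Equiv.subtypeEquivRight fun _ => Finset.mem_compl)]
  rfl

theorem principalMinor_mul_compl_general {n : ℕ}
    (U : Matrix (Fin n) (Fin n) ℂ) (hU : Uᴴ * U = 1) (σ : Finset (Fin n)) :
    principalMinor U σ * principalMinor U σᶜ =
      ((‖principalMinor U σ‖) ^ 2 : ℝ) * U.det := by
  have hcompl : principalMinor U σᶜ = U.det * star (principalMinor U σ) := by
    rw [principalMinor_compl_eq_det_toBlock, principalMinor_eq_det_toBlock]
    -- `convert` reconciles the two `Fintype σ` instances (`Finset.Subtype.fintype` vs `Subtype.fintype`).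
    convert det_toBlock_compl_eq_det_mul_star_det_toBlock U (mul_eq_one_comm.mp hU) (· ∈ σ)
  rw [hcompl, mul_left_comm, Complex.star_def, Complex.mul_conj']
  push_cast
  ring

/-- The product of complementary principal minors of a unitary matrix equals the squared
magnitude of either minor times the determinant of the matrix; in particular the phases of
complementary principal minors add up to the phase of the determinant. -/
theorem principalMinor_mul_compl {n : ℕ} (hn : 0 < n)
    (U : Matrix (Fin n) (Fin n) ℂ) (hU : Uᴴ * U = 1) (σ : Finset (Fin n)) :
    principalMinor U σ * principalMinor U σᶜ =
      ((‖principalMinor U σ‖) ^ 2 : ℝ) * U.det :=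
  principalMinor_mul_compl_general U hU σ
end

section
/- Let n be a positive natural number, let U be an n×n complex unitary matrix, and let σ be a subset of the index set {1,…,n}. Then the complementary principal minor equals the determinant of U times the complex conjugate of the principal minor: det U_{σᶜσᶜ} = det U · conj(det U_{σσ}). -/
/-!
If `A * B = 1`, then in block form along a splitting `m ⊕ n` of the indices,
`A * [[1, B₁₂], [0, B₂₂]] = [[A₁₁, 0], [A₂₁, 1]]`, and taking determinants gives Jacobi's
complementary minor identity `det A * det B₂₂ = det A₁₁`. For unitary `U` take `A = Uᴴ`, `B = U`:
then `conj (det U) * det U_{σᶜσᶜ} = conj (det U_{σσ})`, and `det U * conj (det U) = 1`.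
-/

open Matrix

namespace Matrix

variable {R : Type*} [CommRing R]

theorem det_mul_det_toBlocks₂₂_of_mul_eq_one {m n : Type*} [Fintype m] [Fintype n]
    [DecidableEq m] [DecidableEq n] {A B : Matrix (m ⊕ n) (m ⊕ n) R} (h : A * B = 1) :
    A.det * B.toBlocks₂₂.det = A.toBlocks₁₁.det := by
  obtain ⟨-, h₁₂, -, h₂₂⟩ : _ ∧ A.toBlocks₁₁ * B.toBlocks₁₂ + A.toBlocks₁₂ * B.toBlocks₂₂ = 0 ∧ _ ∧
      A.toBlocks₂₁ * B.toBlocks₁₂ + A.toBlocks₂₂ * B.toBlocks₂₂ = 1 := by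
    rw [← fromBlocks_inj, ← fromBlocks_multiply, fromBlocks_toBlocks, fromBlocks_toBlocks, h,
      fromBlocks_one]
  have key : A * fromBlocks 1 B.toBlocks₁₂ 0 B.toBlocks₂₂ =
      fromBlocks A.toBlocks₁₁ 0 A.toBlocks₂₁ 1 := by
    conv_lhs => rw [← fromBlocks_toBlocks A]
    simp [fromBlocks_multiply, h₁₂, h₂₂]
  simpa [det_fromBlocks_zero₂₁, det_fromBlocks_zero₁₂] using congrArg det key

theorem det_mul_det_submatrix_inr_of_mul_eq_one {ι m n : Type*} [Fintype ι] [DecidableEq ι]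
    [Fintype m] [Fintype n] [DecidableEq m] [DecidableEq n] (e : m ⊕ n ≃ ι)
    {A B : Matrix ι ι R} (h : A * B = 1) :
    A.det * (B.submatrix (e ∘ Sum.inr) (e ∘ Sum.inr)).det =
      (A.submatrix (e ∘ Sum.inl) (e ∘ Sum.inl)).det := by
  have h' : A.submatrix e e * B.submatrix e e = 1 := by
    rw [submatrix_mul_equiv, h, submatrix_one_equiv]
  rw [← det_submatrix_equiv_self e A]
  exact det_mul_det_toBlocks₂₂_of_mul_eq_one h'

theorem det_mul_det_submatrix_compl_of_mul_eq_one {ι : Type*} [Fintype ι] [DecidableEq ι]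
    {A B : Matrix ι ι R} (h : A * B = 1) (s : Finset ι) :
    A.det * (B.submatrix ((↑) : ↥sᶜ → ι) (↑)).det = (A.submatrix ((↑) : ↥s → ι) (↑)).det := by
  let e : ↥s ⊕ ↥sᶜ ≃ ι :=
    (Equiv.sumCongr (Equiv.refl _) (Equiv.subtypeEquivRight fun _ => Finset.mem_compl)).trans
      (Equiv.sumCompl (· ∈ s))
  exact det_mul_det_submatrix_inr_of_mul_eq_one e h

end Matrix

theorem principalMinor_compl_eq_general {n : ℕ}
    (U : Matrix (Fin n) (Fin n) ℂ) (hU : Uᴴ * U = 1) (σ : Finset (Fin n)) :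
    principalMinor U σᶜ = U.det * (starRingEnd ℂ) (principalMinor U σ) := by
  have hdet : U.det * star U.det = 1 := by
    simpa [det_mul, det_conjTranspose] using congrArg det (mul_eq_one_comm.mp hU)
  have hjacobi : star U.det * principalMinor U σᶜ = star (principalMinor U σ) := by
    simpa [principalMinor, ← conjTranspose_submatrix, det_conjTranspose] using
      det_mul_det_submatrix_compl_of_mul_eq_one hU σ
  calc principalMinor U σᶜ = (U.det * star U.det) * principalMinor U σᶜ := by rw [hdet, one_mul]
    _ = U.det * star (principalMinor U σ) := by rw [mul_assoc, hjacobi]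

/-- For a unitary matrix, the complementary principal minor equals the determinant times the
complex conjugate of the principal minor (Jacobi's complementary minor identity). -/
theorem principalMinor_compl_eq {n : ℕ} (hn : 0 < n)
    (U : Matrix (Fin n) (Fin n) ℂ) (hU : Uᴴ * U = 1) (σ : Finset (Fin n)) :
    principalMinor U σᶜ = U.det * (starRingEnd ℂ) (principalMinor U σ) :=
  principalMinor_compl_eq_general U hU σ
end

section
/- Let U be a complex unitary matrix written in 2×2 block form U = [[A, B], [C, D]] with A and D square blocks (possibly of different sizes), and suppose A and D are invertible. Then det(I − A⁻¹ B D⁻¹ C) is a real positive number; in fact det(I − A⁻¹ B D⁻¹ C) = 1/|det A|². -/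
/-!
For unitary `U`, the Schur complement `A - B D⁻¹ C` is `(Aᴴ)⁻¹`: orthogonality of the block
columns, `Aᴴ B + Cᴴ D = 0`, gives `B D⁻¹ C = -(Aᴴ)⁻¹ Cᴴ C`, and `Aᴴ A + Cᴴ C = 1`.
Hence `1 - A⁻¹ B D⁻¹ C = (Aᴴ A)⁻¹`, whose determinant is `1 / |det A|²`.
-/

open Matrix

section BlockUnitary

variable {m n R : Type*} [Fintype m] [Fintype n] [DecidableEq m] [DecidableEq n]

theorem conjTranspose_mul_fromBlocks_eq_one_iff [Semiring R] [StarRing R]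
    {A : Matrix m m R} {B : Matrix m n R} {C : Matrix n m R} {D : Matrix n n R} :
    (fromBlocks A B C D)ᴴ * fromBlocks A B C D = 1 ↔
      Aᴴ * A + Cᴴ * C = 1 ∧ Aᴴ * B + Cᴴ * D = 0 ∧
        Bᴴ * A + Dᴴ * C = 0 ∧ Bᴴ * B + Dᴴ * D = 1 := by
  rw [fromBlocks_conjTranspose, fromBlocks_multiply, ← fromBlocks_one, fromBlocks_inj]

theorem conjTranspose_mul_sub_mul_inv_mul_eq_one [CommRing R] [StarRing R]
    {A : Matrix m m R} {B : Matrix m n R} {C : Matrix n m R} {D : Matrix n n R}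
    (hU : (fromBlocks A B C D)ᴴ * fromBlocks A B C D = 1) (hD : IsUnit D.det) :
    Aᴴ * (A - B * D⁻¹ * C) = 1 := by
  obtain ⟨hcol₁, horth, -, -⟩ := conjTranspose_mul_fromBlocks_eq_one_iff.mp hU
  have hAB : Aᴴ * B = -(Cᴴ * D) := eq_neg_of_add_eq_zero_left horth
  calc Aᴴ * (A - B * D⁻¹ * C) = Aᴴ * A - Aᴴ * B * D⁻¹ * C := by
        rw [Matrix.mul_sub, Matrix.mul_assoc Aᴴ, Matrix.mul_assoc Aᴴ, Matrix.mul_assoc B]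
    _ = Aᴴ * A + Cᴴ * (D * D⁻¹) * C := by
        rw [hAB, Matrix.neg_mul, Matrix.neg_mul, sub_neg_eq_add, Matrix.mul_assoc Cᴴ]
    _ = 1 := by rw [mul_nonsing_inv D hD, Matrix.mul_one, hcol₁]

end BlockUnitary

theorem det_conjTranspose_mul_self {n 𝕜 : Type*} [Fintype n] [DecidableEq n] [RCLike 𝕜]
    (A : Matrix n n 𝕜) : (Aᴴ * A).det = ((‖A.det‖ ^ 2 : ℝ) : 𝕜) := by
  rw [det_mul, det_conjTranspose, RCLike.star_def, RCLike.conj_mul, RCLike.ofReal_pow]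

/-- For a unitary block matrix `[[A, B], [C, D]]` with `A` and `D` square and invertible,
`det (I − A⁻¹ B D⁻¹ C)` is a positive real number, namely `1 / |det A|²`. -/
theorem det_one_sub_schur_real_pos {k l : ℕ}
    (A : Matrix (Fin k) (Fin k) ℂ) (B : Matrix (Fin k) (Fin l) ℂ)
    (C : Matrix (Fin l) (Fin k) ℂ) (D : Matrix (Fin l) (Fin l) ℂ)
    (hU : (fromBlocks A B C D)ᴴ * fromBlocks A B C D = 1)
    (hA : IsUnit A.det) (hD : IsUnit D.det) :
    (1 - A⁻¹ * B * D⁻¹ * C).det = ((1 / ‖A.det‖ ^ 2 : ℝ) : ℂ) := by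
  have hinv : (Aᴴ * A) * (1 - A⁻¹ * B * D⁻¹ * C) = 1 :=
    calc (Aᴴ * A) * (1 - A⁻¹ * B * D⁻¹ * C) = Aᴴ * (A - B * D⁻¹ * C) := by
          rw [Matrix.mul_sub, Matrix.mul_one, Matrix.mul_assoc Aᴴ A, Matrix.mul_assoc A⁻¹,
            Matrix.mul_assoc A⁻¹, mul_nonsing_inv_cancel_left _ _ hA, ← Matrix.mul_sub]
      _ = 1 := conjTranspose_mul_sub_mul_inv_mul_eq_one hU hD
  have hdet := congrArg det hinv
  rw [det_mul, det_one, det_conjTranspose_mul_self] at hdet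
  rw [Complex.ofReal_div, Complex.ofReal_one]
  exact eq_one_div_of_mul_eq_one_right hdet
end

section
/- Let n be a positive natural number, let C be an n×n complex unitary matrix, let θ : {1,…,n} → ℝ, and let w be a complex number with w² = det C. For each subset σ of {1,…,n}, define α_σ = Σ_{p∉σ} θ_p − Σ_{p∈σ} θ_p. Then the number conj(w) · Σ_{σ ⊆ {1,…,n}} C_σ · e^{i α_σ} is real, where C_σ denotes the principal minor of C indexed by σ (with C_∅ = 1). -/
open Matrix

lemma block_det {m k : Type*} [Fintype m] [Fintype k] [DecidableEq m] [DecidableEq k]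
    (A : Matrix m m ℂ) (B : Matrix m k ℂ) (D : Matrix k m ℂ) (E : Matrix k k ℂ)
    (h : fromBlocks A B D E * (fromBlocks A B D E)ᴴ = 1) :
    A.det = (fromBlocks A B D E).det * star E.det := by
  rw [fromBlocks_conjTranspose, fromBlocks_multiply, ← fromBlocks_one, fromBlocks_inj] at h
  obtain ⟨h11, h12, h21, h22⟩ := h
  have key : fromBlocks A B D E * fromBlocks 1 Dᴴ 0 Eᴴ = fromBlocks A 0 D 1 := by
    rw [fromBlocks_multiply]
    simp [h12, h22]
  have h5 := congrArg Matrix.det key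
  rw [det_mul, det_fromBlocks_zero₂₁, det_fromBlocks_zero₁₂, det_one, det_one, one_mul, mul_one,
    det_conjTranspose] at h5
  exact h5.symm

lemma minor_compl {n : ℕ} (C : Matrix (Fin n) (Fin n) ℂ) (hC : Cᴴ * C = 1)
    (σ : Finset (Fin n)) :
    principalMinor C σ = C.det * star (principalMinor C σᶜ) := by
  classical
  set e : {x : Fin n // x ∈ σ} ⊕ {x : Fin n // ¬ x ∈ σ} ≃ Fin n :=
    Equiv.sumCompl (fun x => x ∈ σ)
  set f : {x : Fin n // x ∈ σ} → Fin n := fun i => (i : Fin n)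
  set g : {x : Fin n // ¬ x ∈ σ} → Fin n := fun i => (i : Fin n)
  set A := C.submatrix f f
  set B := C.submatrix f g
  set D := C.submatrix g f
  set E := C.submatrix g g
  have hM : C.submatrix e e = fromBlocks A B D E := by
    ext i j; cases i <;> cases j <;> rfl
  have hMu : fromBlocks A B D E * (fromBlocks A B D E)ᴴ = 1 := by
    rw [← hM, conjTranspose_submatrix]
    rw [show (C.submatrix e e) * (Cᴴ.submatrix e e) = (C * Cᴴ).submatrix e e from
      submatrix_mul_equiv C Cᴴ _ _ _]
    rw [mul_eq_one_comm.mpr hC, submatrix_one_equiv]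
  have hdet : (fromBlocks A B D E).det = C.det := by
    rw [← hM, det_submatrix_equiv_self]
  have hE : E.det = principalMinor C σᶜ := by
    let e2 : {x : Fin n // ¬ x ∈ σ} ≃ {x : Fin n // x ∈ σᶜ} :=
      Equiv.subtypeEquivRight (fun x => (Finset.mem_compl).symm)
    have hEeq : E = ((C.submatrix (fun i : {x : Fin n // x ∈ σᶜ} => (i : Fin n))
        (fun i : {x : Fin n // x ∈ σᶜ} => (i : Fin n))).submatrix e2 e2) := by
      ext i j; rfl
    rw [hEeq, det_submatrix_equiv_self]
    rfl
  have hb := block_det A B D E hMu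
  rw [hdet, hE] at hb
  exact hb

/-- For a unitary matrix `C`, a square root `w` of `det C`, and phases `θ_p`,
the number `conj(w) · Σ_σ C_σ e^{iα_σ}` with `α_σ = Σ_{p∉σ} θ_p − Σ_{p∈σ} θ_p` is real. -/
theorem conj_sqrtDet_mul_sum_minors_real {n : ℕ} (hn : 0 < n)
    (C : Matrix (Fin n) (Fin n) ℂ) (hC : Cᴴ * C = 1)
    (θ : Fin n → ℝ) (w : ℂ) (hw : w ^ 2 = C.det) :
    ((starRingEnd ℂ) w * ∑ σ : Finset (Fin n), principalMinor C σ *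
      Complex.exp (Complex.I * ((∑ p ∈ σᶜ, (θ p : ℂ)) - ∑ p ∈ σ, (θ p : ℂ)))).im = 0 := by
  classical
  have hdet : star C.det * C.det = 1 := by
    have h := congrArg Matrix.det hC
    rwa [det_mul, det_conjTranspose, det_one] at h
  have hww : star w * w = 1 := by
    have h2 : (star w * w) ^ 2 = 1 := by
      rw [mul_pow, ← star_pow, hw, hdet]
    have hr : star w * w = (Complex.normSq w : ℂ) := by
      rw [show (star w) = (starRingEnd ℂ) w from rfl, ← Complex.normSq_eq_conj_mul_self]
    rw [hr] at h2 ⊢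
    have h2' : ((Complex.normSq w : ℝ) ^ 2 : ℂ) = 1 := by push_cast; exact h2
    have h3 : (Complex.normSq w) ^ 2 = 1 := by exact_mod_cast h2'
    have h4 : Complex.normSq w = 1 := by nlinarith [Complex.normSq_nonneg w]
    rw [h4]; norm_num
  set z := ∑ σ : Finset (Fin n), principalMinor C σ *
      Complex.exp (Complex.I * ((∑ p ∈ σᶜ, (θ p : ℂ)) - ∑ p ∈ σ, (θ p : ℂ))) with hz
  rw [← Complex.conj_eq_iff_im, _root_.map_mul, Complex.conj_conj]
  have hconjz : (starRingEnd ℂ) z = star C.det * z := by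
    rw [hz, map_sum, Finset.mul_sum]
    refine Fintype.sum_bijective _ (compl_involutive.bijective) _ _ (fun σ => ?_)
    have harg : (starRingEnd ℂ) (Complex.I * ((∑ p ∈ σᶜ, (θ p : ℂ)) - ∑ p ∈ σ, (θ p : ℂ)))
        = Complex.I * ((∑ p ∈ σᶜᶜ, (θ p : ℂ)) - ∑ p ∈ σᶜ, (θ p : ℂ)) := by
      rw [compl_compl]
      simp only [_root_.map_mul, map_sub, map_sum, Complex.conj_ofReal, Complex.conj_I]
      ring
    have hm : (starRingEnd ℂ) (principalMinor C σ) = star C.det * principalMinor C σᶜ := by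
      calc (starRingEnd ℂ) (principalMinor C σ)
          = (starRingEnd ℂ) (C.det * star (principalMinor C σᶜ)) := by
            rw [← minor_compl C hC σ]
        _ = star C.det * principalMinor C σᶜ := by
            rw [_root_.map_mul, starRingEnd_apply, starRingEnd_apply, star_star]
    rw [_root_.map_mul, hm, ← Complex.exp_conj, harg]
    ring
  rw [hconjz, ← hw]
  have hfin : w * (star (w ^ 2) * z) = (star w * w) * (star w * z) := by
    rw [star_pow]; ring
  rw [hfin, hww, one_mul, starRingEnd_apply]
end

section
/- Let n be a positive natural number, let C be an n×n complex unitary matrix, let θ : {1,…,n} → ℝ, and let w be a complex number with w² = det C. Define G = C·diag(e^{−iθ_1},…,e^{−iθ_n}) + diag(e^{iθ_1},…,e^{iθ_n}), and for each subset σ of {1,…,n} define α_σ = Σ_{p∉σ} θ_p − Σ_{p∈σ} θ_p. Then det G = 0 if and only if Σ_{σ ⊆ {1,…,n}} Re( conj(w) · C_σ · e^{i α_σ} ) = 0, where C_σ denotes the principal minor of C indexed by σ (with C_∅ = 1). -/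
open Matrix

lemma principalMinor_transpose {n : ℕ} (A : Matrix (Fin n) (Fin n) ℂ) (σ : Finset (Fin n)) :
    principalMinor Aᵀ σ = principalMinor A σ := by
  unfold principalMinor
  rw [← Matrix.det_transpose, Matrix.transpose_submatrix, Matrix.transpose_transpose]

lemma det_unitRows {n : ℕ} (B : Matrix (Fin n) (Fin n) ℂ) (t : Finset (Fin n)) :
    (Matrix.of (t.piecewise (fun i => B i) (fun i => Pi.single i (1:ℂ)))).det
      = principalMinor B t := by
  rw [Matrix.twoBlockTriangular_det _ (fun i => i ∈ t)]
  · have h1 : toSquareBlockProp (Matrix.of (t.piecewise (fun i => B i) (fun i => Pi.single i (1:ℂ)))) (fun i => i ∈ t)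
        = B.submatrix (fun i : {a // a ∈ t} => (i : Fin n)) (fun i : {a // a ∈ t} => (i : Fin n)) := by
      ext i j
      simp [toSquareBlockProp_def, Finset.piecewise, i.2]
    have h2 : toSquareBlockProp (Matrix.of (t.piecewise (fun i => B i) (fun i => Pi.single i (1:ℂ)))) (fun i => ¬ i ∈ t)
        = 1 := by
      ext i j
      have hi : ¬ (i : Fin n) ∈ t := i.2
      simp [toSquareBlockProp_def, Finset.piecewise, hi, Matrix.one_apply,
        Pi.single_apply, Subtype.ext_iff, eq_comm]
    rw [h1, h2, Matrix.det_one, mul_one]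
    unfold principalMinor
    congr!
  · intro i hi j hj
    simp only [of_apply, Finset.piecewise, hi, if_neg, not_false_iff]
    exact Pi.single_eq_of_ne (by rintro rfl; exact hi hj) 1

lemma det_mul_diag_add_diag {n : ℕ} (A : Matrix (Fin n) (Fin n) ℂ) (u v : Fin n → ℂ) :
    (A * Matrix.diagonal u + Matrix.diagonal v).det
      = ∑ σ : Finset (Fin n),
          (∏ p ∈ σ, u p) * (∏ p ∈ σᶜ, v p) * principalMinor A σ := by
  rw [← Matrix.det_transpose]
  have ht : (A * Matrix.diagonal u + Matrix.diagonal v)ᵀ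
      = Matrix.of (fun j k => u j * Aᵀ j k + v j * (Pi.single j (1:ℂ) : Fin n → ℂ) k) := by
    ext j k
    simp [Matrix.mul_apply, Matrix.diagonal_apply, Pi.single_apply, Finset.sum_ite_eq,
      mul_comm, Matrix.transpose_apply]
    split <;> simp_all
  rw [ht]
  have key : (Matrix.of (fun j k => u j * Aᵀ j k + v j * (Pi.single j (1:ℂ) : Fin n → ℂ) k)).det
      = (Matrix.detRowAlternating (R := ℂ) (n := Fin n)).toMultilinearMap
          ((fun j => u j • Aᵀ j) + (fun j => v j • (Pi.single j (1:ℂ) : Fin n → ℂ))) := rfl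
  rw [key, MultilinearMap.map_add_univ]
  refine Finset.sum_congr rfl fun s _ => ?_
  have hpw : (s.piecewise (fun j => u j • Aᵀ j) (fun j => v j • (Pi.single j (1:ℂ) : Fin n → ℂ)))
      = fun j => (s.piecewise u v j) •
          (s.piecewise (fun j => (Aᵀ j : Fin n → ℂ)) (fun j => (Pi.single j (1:ℂ) : Fin n → ℂ)) j) := by
    funext j
    by_cases h : j ∈ s <;> simp [Finset.piecewise, h]
  rw [hpw, MultilinearMap.map_smul_univ]
  have hprod : (∏ j, s.piecewise u v j) = (∏ p ∈ s, u p) * (∏ p ∈ sᶜ, v p) := by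
    rw [Finset.prod_piecewise, Finset.univ_inter, Finset.compl_eq_univ_sdiff]
  have hdet : (Matrix.detRowAlternating (R := ℂ) (n := Fin n)).toMultilinearMap
        (s.piecewise (fun j => (Aᵀ j : Fin n → ℂ)) (fun j => (Pi.single j (1:ℂ) : Fin n → ℂ)))
      = principalMinor A s := by
    rw [← principalMinor_transpose A s, ← det_unitRows Aᵀ s]
    rfl
  rw [hdet, hprod, smul_eq_mul]

/-- For a unitary background `C` and a square root `w` of `det C`,
`det G = 0` (with `G = C·diag(e^{−iθ_p}) + diag(e^{iθ_p})`) if and only if the projected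
generalized reflections `Re(conj(w)·C_σ·e^{iα_σ})` cancel out completely, where
`α_σ = Σ_{p∉σ} θ_p − Σ_{p∈σ} θ_p`. -/
theorem det_G_zero_iff_projections_cancel {n : ℕ} (hn : 0 < n)
    (C : Matrix (Fin n) (Fin n) ℂ) (hC : Cᴴ * C = 1)
    (θ : Fin n → ℝ) (w : ℂ) (hw : w ^ 2 = C.det)
    (G : Matrix (Fin n) (Fin n) ℂ)
    (hG : G = C * Matrix.diagonal (fun p => Complex.exp (-(θ p : ℂ) * Complex.I)) +
        Matrix.diagonal (fun p => Complex.exp ((θ p : ℂ) * Complex.I))) :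
    G.det = 0 ↔
      ∑ σ : Finset (Fin n), ((starRingEnd ℂ) w * principalMinor C σ *
        Complex.exp (Complex.I * ((∑ p ∈ σᶜ, (θ p : ℂ)) - ∑ p ∈ σ, (θ p : ℂ)))).re = 0 := by
  set u : Fin n → ℂ := fun p => Complex.exp (-(θ p : ℂ) * Complex.I) with hu_def
  set v : Fin n → ℂ := fun p => Complex.exp ((θ p : ℂ) * Complex.I) with hv_def
  -- Step 1: determinant expansion
  have hdetG : G.det = ∑ σ : Finset (Fin n),
      principalMinor C σ * Complex.exp (Complex.I * ((∑ p ∈ σᶜ, (θ p : ℂ)) - ∑ p ∈ σ, (θ p : ℂ))) := by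
    rw [hG, det_mul_diag_add_diag]
    refine Finset.sum_congr rfl fun σ _ => ?_
    rw [← Complex.exp_sum, ← Complex.exp_sum, ← Complex.exp_add, mul_comm]
    congr 1
    rw [← Finset.sum_mul, ← Finset.sum_mul]
    push_cast
    ring_nf
    rw [Finset.sum_neg_distrib]
    ring
  -- scalar conjugation facts
  have hvu : ∀ p, (starRingEnd ℂ) (v p) = u p := by
    intro p
    rw [hv_def, hu_def, ← Complex.exp_conj]
    congr 1
    simp [Complex.conj_ofReal]
  have huv : ∀ p, (starRingEnd ℂ) (u p) = v p := by
    intro p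
    rw [hv_def, hu_def, ← Complex.exp_conj]
    congr 1
    simp [Complex.conj_ofReal]
  have hvu1 : ∀ p, v p * u p = 1 := by
    intro p
    rw [hv_def, hu_def, ← Complex.exp_add]
    rw [show (θ p : ℂ) * Complex.I + -(θ p : ℂ) * Complex.I = 0 by ring, Complex.exp_zero]
  -- Step 2: conj(det G) = conj(det C) * det G
  have hCconj : Cᵀ * C.map (starRingEnd ℂ) = 1 := by
    ext i j
    have h2 := congrArg (fun M : Matrix (Fin n) (Fin n) ℂ => M i j) hC
    simp only [Matrix.mul_apply, Matrix.conjTranspose_apply, Matrix.one_apply, RCLike.star_def] at h2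
    have h3 := congrArg (starRingEnd ℂ) h2
    simp only [map_sum, _root_.map_mul, Complex.conj_conj, apply_ite (starRingEnd ℂ), _root_.map_one, _root_.map_zero] at h3
    simpa [Matrix.mul_apply, Matrix.transpose_apply, Matrix.map_apply, Matrix.one_apply,
      mul_comm] using h3
  have hGconj : G.map (starRingEnd ℂ) = C.map (starRingEnd ℂ) * Matrix.diagonal v + Matrix.diagonal u := by
    rw [hG]
    ext i j
    simp only [Matrix.map_apply, Matrix.add_apply, Matrix.mul_apply, Matrix.diagonal_apply,
      _root_.map_add, map_sum, _root_.map_mul, apply_ite (starRingEnd ℂ), _root_.map_zero, hvu, huv]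
  have hE : Matrix.diagonal (fun p => v p * v p) * Matrix.diagonal u = Matrix.diagonal v := by
    rw [Matrix.diagonal_mul_diagonal,
      show (fun p => v p * v p * u p) = v from funext fun p => by rw [mul_assoc, hvu1, mul_one]]
  have key1 : Cᵀ * G.map (starRingEnd ℂ)
      = (Matrix.diagonal (fun p => v p * v p) + Cᵀ) * Matrix.diagonal u := by
    rw [hGconj, Matrix.mul_add, ← Matrix.mul_assoc, hCconj, Matrix.one_mul, Matrix.add_mul, hE]
  have key2 : Gᵀ = Matrix.diagonal u * (Matrix.diagonal (fun p => v p * v p) + Cᵀ) := by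
    have hE' : Matrix.diagonal u * Matrix.diagonal (fun p => v p * v p) = Matrix.diagonal v := by
      rw [Matrix.diagonal_mul_diagonal,
        show (fun p => u p * (v p * v p)) = v from funext fun p => by
          rw [← mul_assoc, mul_comm (u p), hvu1, one_mul]]
    rw [hG]
    simp only [Matrix.transpose_add, Matrix.transpose_mul, Matrix.diagonal_transpose]
    rw [Matrix.mul_add, hE', add_comm]
  have hdet1 : (starRingEnd ℂ) C.det * C.det = 1 := by
    have := congrArg Matrix.det hC
    rwa [Matrix.det_mul, Matrix.det_one, Matrix.det_conjTranspose] at this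
  have hmapdet : (G.map (starRingEnd ℂ)).det = (starRingEnd ℂ) G.det := by
    rw [RingHom.map_det]
    rfl
  have hdetconj : (starRingEnd ℂ) G.det = (starRingEnd ℂ) C.det * G.det := by
    have e1 : Cᵀ.det * (G.map (starRingEnd ℂ)).det
        = (Matrix.diagonal (fun p => v p * v p) + Cᵀ).det * (Matrix.diagonal u).det := by
      rw [← Matrix.det_mul, key1, Matrix.det_mul]
    have e2 : G.det = (Matrix.diagonal u).det * (Matrix.diagonal (fun p => v p * v p) + Cᵀ).det := by
      rw [← Matrix.det_transpose G, key2, Matrix.det_mul]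
    rw [Matrix.det_transpose, hmapdet] at e1
    calc (starRingEnd ℂ) G.det
        = (starRingEnd ℂ) C.det * (C.det * (starRingEnd ℂ) G.det) := by
          rw [← mul_assoc, hdet1, one_mul]
      _ = (starRingEnd ℂ) C.det * G.det := by rw [e1, e2]; ring
  -- |w| = 1
  have hww : w * (starRingEnd ℂ) w = 1 := by
    have h4 : (w * (starRingEnd ℂ) w) ^ 2 = 1 := by
      rw [mul_pow, ← map_pow, hw, mul_comm]
      exact hdet1
    rw [Complex.mul_conj] at h4 ⊢
    norm_cast at h4 ⊢
    nlinarith [Complex.normSq_nonneg w]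
  -- z := conj w * det G is real
  have hz : (starRingEnd ℂ) ((starRingEnd ℂ) w * G.det) = (starRingEnd ℂ) w * G.det := by
    rw [_root_.map_mul, Complex.conj_conj, hdetconj, ← hw, map_pow]
    calc w * ((starRingEnd ℂ) w ^ 2 * G.det)
        = (w * (starRingEnd ℂ) w) * ((starRingEnd ℂ) w * G.det) := by ring
      _ = (starRingEnd ℂ) w * G.det := by rw [hww, one_mul]
  have him : ((starRingEnd ℂ) w * G.det).im = 0 := Complex.conj_eq_iff_im.mp hz
  have hw0 : (starRingEnd ℂ) w ≠ 0 := by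
    intro h
    rw [h, mul_zero] at hww
    exact one_ne_zero hww.symm
  -- rewrite the RHS sum
  have hsum : ∑ σ : Finset (Fin n), ((starRingEnd ℂ) w * principalMinor C σ *
        Complex.exp (Complex.I * ((∑ p ∈ σᶜ, (θ p : ℂ)) - ∑ p ∈ σ, (θ p : ℂ)))).re
      = ((starRingEnd ℂ) w * G.det).re := by
    rw [← Complex.re_sum, hdetG, Finset.mul_sum]
    congr 1
    exact Finset.sum_congr rfl fun σ _ => by ring
  rw [hsum]
  constructor
  · intro h
    rw [h, mul_zero, Complex.zero_re]
  · intro h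
    have hz0 : (starRingEnd ℂ) w * G.det = 0 := Complex.ext h him
    rcases mul_eq_zero.mp hz0 with h' | h'
    · exact absurd h' hw0
    · exact h'
end
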